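/- For a mixture of two one-dimensional Gaussians with overall mean zero and parameters α = −μ₁μ₂, β = μ₁+μ₂, γ = (σ₂²−σ₁²)/(μ₂−μ₁), the excess sixth moment satisfies X₆ := M₆ − 15M₄M₂ + 30M₂³ = α(16α² − 12αβ² − 60αβγ + β⁴ + 15β³γ + 45β²γ² + 15βγ³). -/

import Mathlib

/-!
Writing a Gaussian of mean `μ` as `μ + Y` with `Y` centred, its moments are binomial sums of
the centred moments, and Gaussian integration by parts (Stein's identity)
`E[Y ^ (n + 2)] = (n + 1) v E[Y ^ n]` gives `E[Y ^ (2k)] = (2k - 1)‼ vᵏ` and kills the odd ones.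
The mean-zero constraint forces the weights `p₁ = μ₂ / (μ₂ - μ₁)`, `p₂ = -μ₁ / (μ₂ - μ₁)`,
after which `X₆` is a rational identity in `μ₁, μ₂, v₁, v₂`.
-/

open MeasureTheory ProbabilityTheory Real Finset
open scoped NNReal Nat

namespace ProbabilityTheory

variable {μ : ℝ} {v : ℝ≥0}

lemma integrable_pow_gaussianReal (n : ℕ) : Integrable (fun x ↦ x ^ n) (gaussianReal μ v) :=
  integrable_pow_of_mem_interior_integrableExpSet (by simp) n

lemma integrable_gaussianPDFReal_mul_pow (n : ℕ) :
    Integrable (fun x ↦ gaussianPDFReal μ v x * x ^ n) := by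
  by_cases hv : v = 0
  · simp [hv]
  have h := integrable_pow_gaussianReal (μ := μ) (v := v) n
  rw [gaussianReal_of_var_ne_zero _ hv, integrable_withDensity_iff_integrable_smul'
    (measurable_gaussianPDF _ _) (ae_of_all _ fun _ ↦ gaussianPDF_lt_top)] at h
  simpa using h

lemma hasDerivAt_gaussianPDFReal (x : ℝ) :
    HasDerivAt (gaussianPDFReal μ v) (-((x - μ) / v) * gaussianPDFReal μ v x) x := by
  have hexponent : HasDerivAt (fun y ↦ -(y - μ) ^ 2 / (2 * v)) (-((x - μ) / v)) x :=
    (((hasDerivAt_id x).sub_const μ).pow 2).neg.div_const (2 * (v : ℝ)) |>.congr_deriv <| by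
      rw [neg_div, id, pow_one, mul_one, Nat.cast_ofNat, mul_div_mul_left _ _ two_ne_zero]
  exact (hexponent.exp.const_mul (√(2 * π * v))⁻¹).congr_deriv <| by
    rw [gaussianPDFReal]; ring

lemma integral_pow_add_two_gaussianReal_zero (n : ℕ) :
    ∫ x, x ^ (n + 2) ∂gaussianReal 0 v = (n + 1) * v * ∫ x, x ^ n ∂gaussianReal 0 v := by
  by_cases hv : v = 0
  · simp [hv, gaussianReal_zero_var]
  have hintegrable (c : ℝ) (k : ℕ) : Integrable fun x ↦ c * (gaussianPDFReal 0 v x * x ^ k) :=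
    (integrable_gaussianPDFReal_mul_pow k).const_mul c
  have hparts := integral_mul_deriv_eq_deriv_mul_of_integrable
    (u := fun x ↦ x ^ (n + 1)) (u' := fun x ↦ (n + 1) * x ^ n) (v := gaussianPDFReal 0 v)
    (v' := fun x ↦ -(x / v) * gaussianPDFReal 0 v x)
    (fun x _ ↦ by simpa using hasDerivAt_pow (n + 1) x)
    (fun x _ ↦ by simpa using hasDerivAt_gaussianPDFReal (μ := 0) x)
    (by convert hintegrable (-(v : ℝ)⁻¹) (n + 2) using 2 with x; simp only [Pi.mul_apply]; ring)
    (by convert hintegrable (n + 1) n using 2 with x; simp only [Pi.mul_apply]; ring)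
    (by convert hintegrable 1 (n + 1) using 2 with x; simp only [Pi.mul_apply]; ring)
  have hleft : ∫ x, x ^ (n + 1) * (-(x / v) * gaussianPDFReal 0 v x)
      = -(v : ℝ)⁻¹ * ∫ x, gaussianPDFReal 0 v x * x ^ (n + 2) := by
    rw [← integral_const_mul]; congr 1 with x; ring
  have hright : ∫ x, (n + 1) * x ^ n * gaussianPDFReal 0 v x
      = (n + 1) * ∫ x, gaussianPDFReal 0 v x * x ^ n := by
    rw [← integral_const_mul]; congr 1 with x; ring
  rw [hleft, hright] at hparts
  simp_rw [integral_gaussianReal_eq_integral_smul hv, smul_eq_mul]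
  have hv' : (v : ℝ) ≠ 0 := by exact_mod_cast hv
  field_simp at hparts
  linear_combination -hparts

/-- For `n = 0` the truncated `(0 - 1)‼ = 0‼ = 1` matches the convention `(-1)‼ = 1`. -/
lemma integral_pow_gaussianReal_zero (n : ℕ) :
    ∫ x, x ^ n ∂gaussianReal 0 v = if Even n then ((n - 1)‼ : ℝ) * (v : ℝ) ^ (n / 2) else 0 := by
  induction n using Nat.twoStepInduction with
  | zero => simp
  | one => simp
  | more n ih _ =>
    rw [integral_pow_add_two_gaussianReal_zero, ih]
    simp only [Nat.even_add, even_two, iff_true, Nat.add_div_right _ two_pos]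
    split_ifs
    · rw [show n + 2 - 1 = n + 1 by omega, Nat.doubleFactorial_add_one, pow_succ]
      push_cast
      ring
    · simp

lemma integral_pow_gaussianReal (n : ℕ) :
    ∫ x, x ^ n ∂gaussianReal μ v
      = ∑ k ∈ range (n + 1), (∫ x, x ^ k ∂gaussianReal 0 v) * μ ^ (n - k) * n.choose k := by
  conv_lhs => rw [← zero_add μ, ← gaussianReal_map_add_const μ,
    integral_map (by fun_prop) (by fun_prop)]
  simp_rw [add_pow]
  rw [integral_finsetSum _ fun k _ ↦ ((integrable_pow_gaussianReal k).mul_const _).mul_const _]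
  simp_rw [integral_mul_const]

lemma integral_pow_two_gaussianReal : ∫ x, x ^ 2 ∂gaussianReal μ v = μ ^ 2 + v := by
  rw [integral_pow_gaussianReal]
  simp only [sum_range_succ, sum_range_zero, integral_pow_gaussianReal_zero]
  norm_num [Nat.even_iff]

lemma integral_pow_four_gaussianReal :
    ∫ x, x ^ 4 ∂gaussianReal μ v = μ ^ 4 + 6 * μ ^ 2 * v + 3 * v ^ 2 := by
  rw [integral_pow_gaussianReal]
  simp only [sum_range_succ, sum_range_zero, integral_pow_gaussianReal_zero]
  norm_num [Nat.even_iff, Nat.doubleFactorial, Nat.choose]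
  ring

lemma integral_pow_six_gaussianReal :
    ∫ x, x ^ 6 ∂gaussianReal μ v
      = μ ^ 6 + 15 * μ ^ 4 * v + 45 * μ ^ 2 * v ^ 2 + 15 * v ^ 3 := by
  rw [integral_pow_gaussianReal]
  simp only [sum_range_succ, sum_range_zero, integral_pow_gaussianReal_zero]
  norm_num [Nat.even_iff, Nat.doubleFactorial, Nat.choose]
  ring

end ProbabilityTheory

theorem mixture_excess_sixth_moment_general (p₁ p₂ μ₁ μ₂ : ℝ) (v₁ v₂ : NNReal)
    (hsum : p₁ + p₂ = 1)
    (hmean : p₁ * μ₁ + p₂ * μ₂ = 0) (hne : μ₁ ≠ μ₂)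
    (α β γ : ℝ) (hα : α = -(μ₁ * μ₂)) (hβ : β = μ₁ + μ₂)
    (hγ : γ = ((v₂ : ℝ) - (v₁ : ℝ)) / (μ₂ - μ₁))
    (M₂ M₄ M₆ : ℝ)
    (hM₂ : M₂ = p₁ * ∫ x, x ^ 2 ∂(gaussianReal μ₁ v₁)
        + p₂ * ∫ x, x ^ 2 ∂(gaussianReal μ₂ v₂))
    (hM₄ : M₄ = p₁ * ∫ x, x ^ 4 ∂(gaussianReal μ₁ v₁)
        + p₂ * ∫ x, x ^ 4 ∂(gaussianReal μ₂ v₂))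
    (hM₆ : M₆ = p₁ * ∫ x, x ^ 6 ∂(gaussianReal μ₁ v₁)
        + p₂ * ∫ x, x ^ 6 ∂(gaussianReal μ₂ v₂)) :
    M₆ - 15 * M₄ * M₂ + 30 * M₂ ^ 3
      = α * (16 * α ^ 2 - 12 * α * β ^ 2 - 60 * α * β * γ + β ^ 4
          + 15 * β ^ 3 * γ + 45 * β ^ 2 * γ ^ 2 + 15 * β * γ ^ 3) := by
  simp only [integral_pow_two_gaussianReal, integral_pow_four_gaussianReal,
    integral_pow_six_gaussianReal] at hM₂ hM₄ hM₆
  have hgap : μ₂ - μ₁ ≠ 0 := sub_ne_zero.mpr hne.symm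
  have hp₁ : p₁ = μ₂ / (μ₂ - μ₁) := by
    rw [eq_div_iff hgap]
    linear_combination μ₂ * hsum - hmean
  have hp₂ : p₂ = -μ₁ / (μ₂ - μ₁) := by
    rw [eq_div_iff hgap]
    linear_combination hmean - μ₁ * hsum
  subst hp₁ hp₂ hα hβ hγ hM₂ hM₄ hM₆
  field_simp
  ring

/-- Excess sixth moment of a zero-mean mixture of two Gaussians:
`X₆ := M₆ − 15M₄M₂ + 30M₂³
     = α(16α² − 12αβ² − 60αβγ + β⁴ + 15β³γ + 45β²γ² + 15βγ³)`. -/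
theorem mixture_excess_sixth_moment (p₁ p₂ μ₁ μ₂ : ℝ) (v₁ v₂ : NNReal)
    (hp₁ : 0 < p₁) (hp₂ : 0 < p₂) (hsum : p₁ + p₂ = 1)
    (hmean : p₁ * μ₁ + p₂ * μ₂ = 0) (hne : μ₁ ≠ μ₂)
    (α β γ : ℝ) (hα : α = -(μ₁ * μ₂)) (hβ : β = μ₁ + μ₂)
    (hγ : γ = ((v₂ : ℝ) - (v₁ : ℝ)) / (μ₂ - μ₁))
    (M₂ M₄ M₆ : ℝ)
    (hM₂ : M₂ = p₁ * ∫ x, x ^ 2 ∂(gaussianReal μ₁ v₁)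
        + p₂ * ∫ x, x ^ 2 ∂(gaussianReal μ₂ v₂))
    (hM₄ : M₄ = p₁ * ∫ x, x ^ 4 ∂(gaussianReal μ₁ v₁)
        + p₂ * ∫ x, x ^ 4 ∂(gaussianReal μ₂ v₂))
    (hM₆ : M₆ = p₁ * ∫ x, x ^ 6 ∂(gaussianReal μ₁ v₁)
        + p₂ * ∫ x, x ^ 6 ∂(gaussianReal μ₂ v₂)) :
    M₆ - 15 * M₄ * M₂ + 30 * M₂ ^ 3
      = α * (16 * α ^ 2 - 12 * α * β ^ 2 - 60 * α * β * γ + β ^ 4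
          + 15 * β ^ 3 * γ + 45 * β ^ 2 * γ ^ 2 + 15 * β * γ ^ 3) :=
  mixture_excess_sixth_moment_general p₁ p₂ μ₁ μ₂ v₁ v₂ hsum hmean hne α β γ hα hβ hγ M₂ M₄ M₆ hM₂
    hM₄ hM₆
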